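/- Let h: {a,b}* → {a,b}* be the morphism with h(a) = abaabaababa and h(b) = babababab, and let Ω_3 = h^ω(a). Then Ω_3 contains neither aaa nor bb as a factor. -/

import Mathlib

def la : Bool := false
def lb : Bool := true

/-- Apply the binary morphism determined by `ha = h(a)`, `hb = h(b)` to a word. -/
def applyM (ha hb : List Bool) (u : List Bool) : List Bool :=
  (u.map (fun c => if c then hb else ha)).flatten

/-- `w` is an abelian `k`-power: a concatenation of `k` nonempty pairwise anagram blocks. -/
def IsAbelianPow (k : Nat) (w : List Bool) : Prop :=
  ∃ vs : List (List Bool), vs.length = k ∧ (∀ v ∈ vs, v ≠ []) ∧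
    vs.Pairwise List.Perm ∧ w = vs.flatten

/-- `w` contains an abelian `k`-power as a factor. -/
def ContainsAbelianPow (k : Nat) (w : List Bool) : Prop :=
  ∃ u, u <:+: w ∧ IsAbelianPow k u

/-- `w` is abelian `k`-power free. -/
def AbelianPowFree (k : Nat) (w : List Bool) : Prop := ¬ ContainsAbelianPow k w

/-- The morphism `h` is abelian `k`-power free. -/
def MorphAbelianPowFree (k : Nat) (ha hb : List Bool) : Prop :=
  ∀ u : List Bool, AbelianPowFree k u → AbelianPowFree k (applyM ha hb u)

/-- `u` is a (finite) factor of the infinite word `W`. -/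
def FactorOfInf (u : List Bool) (W : Nat → Bool) : Prop :=
  ∃ i : Nat, u = (List.range u.length).map (fun j => W (i + j))

/-- `u` is a prefix of the infinite word `W`. -/
def PrefixOfInf (u : List Bool) (W : Nat → Bool) : Prop :=
  u = (List.range u.length).map W

/-!
Read a word with the automaton whose state is the part of the current run of equal letters
that could still grow into `aaa` or `bb`; it rejects exactly the words containing one of them.
Both `h(a) = abaabaababa` and `h(b) = babababab` are rejected from exactly the states from
which their first letter is, and end in a single copy of their last letter, so reading `h(c)`
has the effect of reading `c`, except that a state `aa` is weakened to `a`. Weakening only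
helps acceptance, so `h` maps accepted words to accepted words, and every `h^n(a)` — hence
every prefix of `Ω_3` — avoids `aaa` and `bb`.
-/

inductive Tail
  | empty | a | aa | b

namespace Tail

def step : Tail → Bool → Option Tail
  | b, true => none
  | _, true => some b
  | aa, false => none
  | a, false => some aa
  | _, false => some a

def run (s : Tail) (w : List Bool) : Option Tail :=
  w.foldlM step s

def collapse : Tail → Tail
  | aa => a
  | s => s

theorem run_cons (s : Tail) (c : Bool) (w : List Bool) :
    run s (c :: w) = (step s c).bind (run · w) := rfl

theorem run_append (s : Tail) (x y : List Bool) :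
    run s (x ++ y) = (run s x).bind (run · y) := by
  simp [run, List.foldlM_append]

theorem run_eq_none_of_isInfix {y w : List Bool} (hy : ∀ t, run t y = none) (hyw : y <:+: w)
    (s : Tail) : run s w = none := by
  obtain ⟨x, z, rfl⟩ := hyw
  simp [run_append, hy]

theorem run_aaa (t : Tail) : run t [la, la, la] = none := by
  cases t <;> rfl

theorem run_bb (t : Tail) : run t [lb, lb] = none := by
  cases t <;> rfl

theorem isSome_run_collapse {s : Tail} {w : List Bool} (h : (run s w).isSome) :
    (run (collapse s) w).isSome := by
  cases s with
  | aa =>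
    cases w with
    | nil => rfl
    | cons c w =>
      cases c
      · simp [run_cons, step] at h
      · exact h
  | _ => exact h

end Tail

theorem applyM_append (ha hb x y : List Bool) :
    applyM ha hb (x ++ y) = applyM ha hb x ++ applyM ha hb y := by
  simp [applyM]

theorem applyM_cons (ha hb : List Bool) (c : Bool) (w : List Bool) :
    applyM ha hb (c :: w) = applyM ha hb [c] ++ applyM ha hb w :=
  applyM_append ha hb [c] w

theorem applyM_singleton (ha hb : List Bool) (c : Bool) :
    applyM ha hb [c] = if c then hb else ha := by
  simp [applyM]

theorem mul_length_le_length_applyM {k : ℕ} {ha hb : List Bool} (hka : k ≤ ha.length)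
    (hkb : k ≤ hb.length) (w : List Bool) : k * w.length ≤ (applyM ha hb w).length := by
  induction w with
  | nil => simp [applyM]
  | cons c w ih =>
    rw [applyM_cons, List.length_append, List.length_cons, mul_add_one, add_comm]
    cases c <;> simp only [applyM_singleton, Bool.false_eq_true, if_true, if_false] <;> omega

def morph3 : List Bool → List Bool :=
  applyM [la, lb, la, la, lb, la, la, lb, la, lb, la] [lb, la, lb, la, lb, la, lb, la, lb]

open Tail in
theorem run_morph3_singleton (s : Tail) (c : Bool) :
    run s (morph3 [c]) = (step s c).map collapse := by
  cases s <;> cases c <;> rfl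

open Tail in
theorem isSome_run_morph3 (w : List Bool) {s : Tail} (h : (run s w).isSome) :
    (run s (morph3 w)).isSome := by
  induction w generalizing s with
  | nil => simpa [morph3, applyM] using h
  | cons c w ih =>
    rw [run_cons] at h
    rw [show morph3 (c :: w) = morph3 [c] ++ morph3 w from applyM_cons _ _ c w, run_append,
      run_morph3_singleton]
    cases hst : step s c with
    | none => simp [hst] at h
    | some t =>
      rw [hst, Option.bind_some] at h
      exact ih (isSome_run_collapse h)

theorem two_pow_le_length_iterate_morph3 (n : ℕ) : 2 ^ n ≤ (morph3^[n] [la]).length := by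
  induction n with
  | zero => simp
  | succ n ih =>
    rw [Function.iterate_succ_apply', pow_succ, mul_comm]
    exact (Nat.mul_le_mul_left 2 ih).trans
      (mul_length_le_length_applyM (by decide) (by decide) _)

theorem isSome_run_iterate_morph3 (n : ℕ) : (Tail.run .empty (morph3^[n] [la])).isSome := by
  induction n with
  | zero => rfl
  | succ n ih =>
    rw [Function.iterate_succ_apply']
    exact isSome_run_morph3 _ ih

theorem FactorOfInf.exists_isInfix {u : List Bool} {W : ℕ → Bool} (hu : FactorOfInf u W)
    {p : ℕ → List Bool} (hp : ∀ n, PrefixOfInf (p n) W) (hlen : ∀ n, n ≤ (p n).length) :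
    ∃ n, u <:+: p n := by
  obtain ⟨i, hu⟩ := hu
  have hq := hp (i + u.length)
  have hq_len := hlen (i + u.length)
  refine ⟨i + u.length, ?_⟩
  suffices hu' : u = ((p (i + u.length)).drop i).take u.length by
    calc u = _ := hu'
      _ <:+: _ := (List.take_prefix _ _).isInfix.trans (List.drop_suffix _ _).isInfix
  apply List.ext_getElem
  · simp only [List.length_take, List.length_drop]
    omega
  · intro j _ _
    rw [List.getElem_take, List.getElem_drop, List.getElem_of_eq hq, List.getElem_of_eq hu]
    simp

/-- the infinite fixed point of `h(a) = abaabaababa`, `h(b) = babababab`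
contains neither `aaa` nor `bb` as a factor. -/
theorem fixedPoint_avoids_a3_bb (W : Nat → Bool)
    (hW : ∀ n : Nat,
      PrefixOfInf ((applyM [la, lb, la, la, lb, la, la, lb, la, lb, la]
        [lb, la, lb, la, lb, la, lb, la, lb])^[n] [la]) W) :
    ¬ FactorOfInf [la,la,la] W ∧ ¬ FactorOfInf [lb,lb] W := by
  have hlen (n : ℕ) : n ≤ (morph3^[n] [la]).length :=
    n.lt_two_pow_self.le.trans (two_pow_le_length_iterate_morph3 n)
  have avoids (y : List Bool) (hy : ∀ t, Tail.run t y = none) : ¬ FactorOfInf y W := by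
    intro hfac
    obtain ⟨n, hn⟩ := hfac.exists_isInfix (p := fun n => morph3^[n] [la]) hW hlen
    simpa [Tail.run_eq_none_of_isInfix hy hn] using isSome_run_iterate_morph3 n
  exact ⟨avoids _ Tail.run_aaa, avoids _ Tail.run_bb⟩
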